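/- arXiv:2109.05387 — 4 statements merged into one kernel-verified Lean document; each statement's English description precedes it below -/
import Mathlib

section
/- For $h(n,k) = \binom{n}{k}\left(1-\frac{k}{n}\right)^{2n-2k}\left(\frac{k}{n}\right)^{2k}$, if $n > 5$ and $2 \le k \le n-2$ then $h(n,k) \le 1/n^2$. -/
/-- Numeric: `4 ≤ exp (10/7)`. -/
lemma aux_exp_bound1 : (4:ℝ) ≤ Real.exp (10/7) := by
  have h7 : ((4:ℝ))^7 ≤ (Real.exp (10/7))^7 := by
    rw [← Real.exp_nat_mul]
    norm_num
    have h1 : (2.7182818283:ℝ)^(10:ℕ) ≤ (Real.exp 1)^(10:ℕ) :=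
      pow_le_pow_left₀ (by norm_num) Real.exp_one_gt_d9.le _
    have h2 : (Real.exp 1)^(10:ℕ) = Real.exp 10 := by
      rw [← Real.exp_nat_mul]; norm_num
    nlinarith [h1, h2]
  exact le_of_pow_le_pow_left₀ (by norm_num) (Real.exp_pos _).le h7

/-- Numeric: `9 ≤ exp (9/4)`. -/
lemma aux_exp_bound2 : (9:ℝ) ≤ Real.exp (9/4) := by
  have h4 : ((9:ℝ))^4 ≤ (Real.exp (9/4))^4 := by
    rw [← Real.exp_nat_mul]
    norm_num
    have h1 : (2.7182818283:ℝ)^(9:ℕ) ≤ (Real.exp 1)^(9:ℕ) :=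
      pow_le_pow_left₀ (by norm_num) Real.exp_one_gt_d9.le _
    have h2 : (Real.exp 1)^(9:ℕ) = Real.exp 9 := by
      rw [← Real.exp_nat_mul]; norm_num
    nlinarith [h1, h2]
  exact le_of_pow_le_pow_left₀ (by norm_num) (Real.exp_pos _).le h4

/-- For `k ≥ 4` we have `k² ≤ exp (k-1)`. -/
lemma aux_sq_le_exp (k : ℕ) (hk : 4 ≤ k) : ((k:ℝ))^2 ≤ Real.exp ((k:ℝ) - 1) := by
  induction k, hk using Nat.le_induction with
  | base =>
      have h1 : (2.7182818283:ℝ)^(3:ℕ) ≤ (Real.exp 1)^(3:ℕ) :=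
        pow_le_pow_left₀ (by norm_num) Real.exp_one_gt_d9.le _
      have h2 : (Real.exp 1)^(3:ℕ) = Real.exp 3 := by
        rw [← Real.exp_nat_mul]; norm_num
      norm_num
      nlinarith [h1, h2]
  | succ k hk ih =>
      have he : Real.exp ((↑(k+1):ℝ) - 1) = Real.exp ((k:ℝ) - 1) * Real.exp 1 := by
        rw [← Real.exp_add]; push_cast; ring_nf
      rw [he]
      have h1 : (2.7182818283:ℝ) ≤ Real.exp 1 := Real.exp_one_gt_d9.le
      have hk4 : (4:ℝ) ≤ (k:ℝ) := by exact_mod_cast hk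
      have hpos : (0:ℝ) < Real.exp ((k:ℝ) - 1) := Real.exp_pos _
      push_cast
      nlinarith [ih, h1, hk4, hpos, sq_nonneg ((k:ℝ))]

/-- One binomial term is at most the whole sum `(x + (1-x))^n = 1`. -/
lemma aux_binom_term_le_one (n k : ℕ) (x : ℝ) (h0 : 0 ≤ x) (h1 : x ≤ 1) (hk : k ≤ n) :
    (n.choose k : ℝ) * x ^ k * (1 - x) ^ (n - k) ≤ 1 := by
  have hexp := add_pow x (1 - x) n
  have hsum : (∑ i ∈ Finset.range (n+1), x ^ i * (1-x) ^ (n-i) * (n.choose i : ℝ)) = 1 := by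
    rw [← hexp]; norm_num
  have hmem : k ∈ Finset.range (n+1) := Finset.mem_range.2 (Nat.lt_succ_of_le hk)
  have hterm : x ^ k * (1-x) ^ (n-k) * (n.choose k : ℝ) ≤
      ∑ i ∈ Finset.range (n+1), x ^ i * (1-x) ^ (n-i) * (n.choose i : ℝ) := by
    apply Finset.single_le_sum (f := fun i => x ^ i * (1-x) ^ (n-i) * (n.choose i : ℝ)) _ hmem
    intro i _
    have : (0:ℝ) ≤ 1 - x := by linarith
    positivity
  rw [hsum] at hterm
  linarith [hterm, (by ring : x ^ k * (1-x) ^ (n-k) * (n.choose k : ℝ)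
    = (n.choose k : ℝ) * x ^ k * (1 - x) ^ (n - k))]

/-- Core: for `2 ≤ k`, `2k ≤ n`, `6 ≤ n`: `(k/n)^k (1-k/n)^(n-k) ≤ 1/n²`. -/
lemma aux_key (n k : ℕ) (hn : 6 ≤ n) (hk2 : 2 ≤ k) (h2k : 2*k ≤ n) :
    ((k:ℝ)/n)^k * (1 - (k:ℝ)/n)^(n-k) ≤ 1 / (n:ℝ)^2 := by
  have hn0 : (0:ℝ) < n := by positivity
  set p : ℝ := (k:ℝ)/n with hp
  have hp0 : 0 ≤ p := by positivity
  have h2kr : 2*(k:ℝ) ≤ (n:ℝ) := by exact_mod_cast h2k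
  have hphalf : 2*p ≤ 1 := by
    rw [hp, ← mul_div_assoc, div_le_one hn0]; linarith
  have hq0 : (0:ℝ) ≤ 1 - p := by linarith
  -- Step 1 : p^k (1-p)^(n-k) ≤ p^2 (1-p)^(n-2)
  have step1 : p^k * (1-p)^(n-k) ≤ p^2 * (1-p)^(n-2) := by
    have hsplit1 : p^k = p^(k-2) * p^2 := by
      rw [← pow_add]; congr 1; omega
    have hsplit2 : (1-p)^(n-2) = (1-p)^(k-2) * (1-p)^(n-k) := by
      rw [← pow_add]; congr 1; omega
    rw [hsplit1, hsplit2]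
    have hple : p^(k-2) ≤ (1-p)^(k-2) := pow_le_pow_left₀ hp0 (by linarith) _
    have hfac : (0:ℝ) ≤ p^2 * (1-p)^(n-k) := by positivity
    nlinarith [mul_nonneg (sub_nonneg.2 hple) hfac]
  -- Step 2 : it suffices that k² (1-p)^(n-2) ≤ 1
  have step2 : ((k:ℝ))^2 * (1-p)^(n-2) ≤ 1 := by
    -- reduce to k² ≤ exp ((n-2) * p) except small numeric cases
    have hcast : ((n-2 : ℕ) : ℝ) = (n:ℝ) - 2 := by
      have : (2:ℕ) ≤ n := by omega
      push_cast [Nat.cast_sub this]; ring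
    have main : ∀ (_ : ((k:ℝ))^2 ≤ Real.exp (((n:ℝ)-2) * p)),
        ((k:ℝ))^2 * (1-p)^(n-2) ≤ 1 := by
      intro hexp
      have h1 : (1-p)^(n-2) ≤ (Real.exp (-p))^(n-2) := by
        apply pow_le_pow_left₀ hq0
        linarith [Real.add_one_le_exp (-p)]
      have h2 : (Real.exp (-p))^(n-2) = Real.exp (((n:ℝ)-2) * (-p)) := by
        rw [← Real.exp_nat_mul, hcast]
      have h3 : Real.exp (((n:ℝ)-2) * (-p)) = (Real.exp (((n:ℝ)-2) * p))⁻¹ := by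
        rw [← Real.exp_neg]; ring_nf
      have hEpos : (0:ℝ) < Real.exp (((n:ℝ)-2) * p) := Real.exp_pos _
      have h4 : ((k:ℝ))^2 * (1-p)^(n-2) ≤ ((k:ℝ))^2 * (Real.exp (((n:ℝ)-2) * p))⁻¹ := by
        have := h1.trans (le_of_eq (h2.trans h3))
        have hk0 : (0:ℝ) ≤ ((k:ℝ))^2 := by positivity
        exact mul_le_mul_of_nonneg_left this hk0
      have h5 : ((k:ℝ))^2 * (Real.exp (((n:ℝ)-2) * p))⁻¹ ≤ 1 := by
        rw [← div_eq_mul_inv, div_le_one hEpos]; exact hexp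
      linarith
    rcases Nat.lt_or_ge k 4 with hk4 | hk4
    · interval_cases k
      · -- k = 2
        rcases Nat.lt_or_ge n 7 with hn7 | hn7
        · -- n = 6
          interval_cases n
          rw [hp]; norm_num
        · apply main
          have harg : (10:ℝ)/7 ≤ ((n:ℝ)-2) * p := by
            rw [hp, ← mul_div_assoc, le_div_iff₀ hn0]
            have hn7r : (7:ℝ) ≤ n := by exact_mod_cast hn7
            push_cast
            nlinarith
          calc ((2:ℕ):ℝ)^2 ≤ Real.exp (10/7) := by push_cast; norm_num [aux_exp_bound1]
            _ ≤ Real.exp (((n:ℝ)-2) * p) := Real.exp_le_exp.2 harg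
      · -- k = 3
        rcases Nat.lt_or_ge n 8 with hn8 | hn8
        · interval_cases n
          · rw [hp]; norm_num
          · rw [hp]; norm_num
        · apply main
          have harg : (9:ℝ)/4 ≤ ((n:ℝ)-2) * p := by
            rw [hp, ← mul_div_assoc, le_div_iff₀ hn0]
            have hn8r : (8:ℝ) ≤ n := by exact_mod_cast hn8
            push_cast
            nlinarith
          calc ((3:ℕ):ℝ)^2 ≤ Real.exp (9/4) := by push_cast; norm_num [aux_exp_bound2]
            _ ≤ Real.exp (((n:ℝ)-2) * p) := Real.exp_le_exp.2 harg
    · apply main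
      have harg : (k:ℝ) - 1 ≤ ((n:ℝ)-2) * p := by
        rw [hp, ← mul_div_assoc, le_div_iff₀ hn0]
        nlinarith
      exact (aux_sq_le_exp k hk4).trans (Real.exp_le_exp.2 harg)
  -- combine
  have hstep := mul_le_mul_of_nonneg_right step2 (by positivity : (0:ℝ) ≤ ((n:ℝ)^2)⁻¹)
  have hfin : p^2 * (1-p)^(n-2) ≤ 1 / (n:ℝ)^2 := by
    calc p^2 * (1-p)^(n-2) = ((k:ℝ))^2 * (1-p)^(n-2) * ((n:ℝ)^2)⁻¹ := by
          rw [hp, div_pow, div_eq_mul_inv]; ring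
      _ ≤ 1 * ((n:ℝ)^2)⁻¹ := hstep
      _ = 1 / (n:ℝ)^2 := by rw [one_mul, one_div]
  linarith

/-- `(k/n)^k (1-k/n)^(n-k) ≤ 1/n²` for `2 ≤ k ≤ n-2`, `6 ≤ n`. -/
lemma aux_fact2 (n k : ℕ) (hn : 6 ≤ n) (hk2 : 2 ≤ k) (hkn : k + 2 ≤ n) :
    ((k:ℝ)/n)^k * (1 - (k:ℝ)/n)^(n-k) ≤ 1 / (n:ℝ)^2 := by
  rcases le_or_gt (2*k) n with h | h
  · exact aux_key n k hn hk2 h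
  · have hkn' : k ≤ n := by omega
    have hn0 : (0:ℝ) < n := by positivity
    have key := aux_key n (n-k) hn (by omega) (by omega)
    have e1 : n - (n - k) = k := by omega
    have e2 : ((n-k : ℕ):ℝ)/n = 1 - (k:ℝ)/n := by
      rw [Nat.cast_sub hkn']
      field_simp
    have e3 : 1 - ((n-k : ℕ):ℝ)/n = (k:ℝ)/n := by
      rw [e2]; ring
    rw [e1, e3, e2, mul_comm] at key
    exact key

/-- For `h(n,k) = C(n,k) (1-k/n)^(2n-2k) (k/n)^(2k)`: if `n > 5` and
`2 ≤ k ≤ n-2` then `h(n,k) ≤ 1/n²`. -/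
theorem stmt_3 (n k : ℕ) (hn : 5 < n) (hk2 : 2 ≤ k) (hkn : k ≤ n - 2) :
    (n.choose k : ℝ) * (1 - (k : ℝ) / n) ^ (2 * n - 2 * k) * ((k : ℝ) / n) ^ (2 * k)
      ≤ 1 / (n : ℝ) ^ 2 := by
  have hkn2 : k + 2 ≤ n := by omega
  have hkn' : k ≤ n := by omega
  have hn0 : (0:ℝ) < n := by positivity
  have hx0 : (0:ℝ) ≤ (k:ℝ)/n := by positivity
  have hx1 : (k:ℝ)/n ≤ 1 := by
    rw [div_le_one hn0]; exact_mod_cast hkn'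
  have e1 : 2*n - 2*k = (n-k) + (n-k) := by omega
  have e2 : 2*k = k + k := by omega
  rw [e1, e2, pow_add, pow_add]
  have b1 := aux_binom_term_le_one n k ((k:ℝ)/n) hx0 hx1 hkn'
  have b2 := aux_fact2 n k (by omega) hk2 hkn2
  have hnn : (0:ℝ) ≤ ((k:ℝ)/n)^k * (1 - (k:ℝ)/n)^(n-k) := by
    have : (0:ℝ) ≤ 1 - (k:ℝ)/n := by linarith
    positivity
  have key : ((n.choose k : ℝ) * ((k:ℝ)/n)^k * (1 - (k:ℝ)/n)^(n-k)) *
      (((k:ℝ)/n)^k * (1 - (k:ℝ)/n)^(n-k)) ≤ 1 * (1 / (n:ℝ)^2) := by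
    apply mul_le_mul b1 b2 hnn (by norm_num)
  calc (n.choose k : ℝ) * ((1 - (k:ℝ)/n)^(n-k) * (1 - (k:ℝ)/n)^(n-k)) *
        (((k:ℝ)/n)^k * ((k:ℝ)/n)^k)
      = ((n.choose k : ℝ) * ((k:ℝ)/n)^k * (1 - (k:ℝ)/n)^(n-k)) *
        (((k:ℝ)/n)^k * (1 - (k:ℝ)/n)^(n-k)) := by ring
    _ ≤ 1 * (1 / (n:ℝ)^2) := key
    _ = 1 / (n:ℝ)^2 := by ring
end

section
/- For all real $x > 5$, $\log\left(\frac{x(x-1)}{2}\right) + 2(x-2)\log\left(1-\frac{2}{x}\right) + 4\log\left(\frac{2}{x}\right) + 2\log x < 0$. -/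
/-- For all real `x > 5`,
`log(x(x-1)/2) + 2(x-2) log(1-2/x) + 4 log(2/x) + 2 log x < 0`. -/
theorem stmt_5 (x : ℝ) (hx : 5 < x) :
    Real.log (x * (x - 1) / 2) + 2 * (x - 2) * Real.log (1 - 2 / x)
        + 4 * Real.log (2 / x) + 2 * Real.log x < 0 := by
  have hx0 : (0:ℝ) < x := by linarith
  have hx1 : (0:ℝ) < x - 1 := by linarith
  have h2x : (0:ℝ) < 1 - 2 / x := by
    rw [sub_pos, div_lt_one hx0]; linarith
  have hlog1 : Real.log (x * (x - 1) / 2) =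
      Real.log x + Real.log (x - 1) - Real.log 2 := by
    rw [Real.log_div (by positivity) (by norm_num),
        Real.log_mul (ne_of_gt hx0) (ne_of_gt hx1)]
  have hlog2 : Real.log (2 / x) = Real.log 2 - Real.log x :=
    Real.log_div two_ne_zero (ne_of_gt hx0)
  have hT : Real.log (1 - 2 / x) ≤ -(2 / x) := by
    have := Real.log_le_sub_one_of_pos h2x
    linarith
  have hT2 : 2 * (x - 2) * Real.log (1 - 2 / x) ≤ 2 * (x - 2) * (-(2 / x)) :=
    mul_le_mul_of_nonneg_left hT (by linarith)
  have heq : 2 * (x - 2) * (-(2 / x)) = -4 + 8 / x := by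
    field_simp; ring
  have h8 : 8 / x ≤ 8 / 5 := by
    rw [div_le_div_iff₀ hx0 (by norm_num)]; linarith
  have hlogx : Real.log (x - 1) < Real.log x := Real.log_lt_log hx1 (by linarith)
  have hlog2lt : Real.log 2 < 0.7 := by
    have := Real.log_two_lt_d9; linarith
  rw [hlog1, hlog2]
  linarith
end

section
/- For integers $n > 5$, $\sum_{k=2}^{n-1} \binom{n}{k}\left(1-\frac{k}{n}\right)^{2n-2k}\left(\frac{k}{n}\right)^{2k} \le \frac{2}{n}$. -/
/-!
Writing `p = k/n` and `b = C(n,k) p^k (1-p)^(n-k)`, the `k`-th summand is `b² / C(n,k)`, and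
`b ≤ 1` because it is one term of the binomial expansion of `(p + (1-p))^n`. So the summand is at
most `1 / C(n,k)`. This is sharp enough for `k = 2` and `k = n - 2` (where it is `2/(n(n-1))`) and
for `3 ≤ k ≤ n - 3` (where it is at most `1 / C(n,3)`), but not for `k = n - 1`: there the summand
is `(1/n) ((n-1)/n)^(2(n-1))`, and Bernoulli's inequality `(1 + 1/m)^m ≥ 2` bounds it by `1/(4n)`.
-/

open Finset

namespace Nat

theorem choose_le_choose_of_le_of_le_half {n a b : ℕ} (hab : a ≤ b) (hb : b ≤ n / 2) :
    n.choose a ≤ n.choose b := by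
  induction b, hab using Nat.le_induction with
  | base => rfl
  | succ b _ ih => exact (ih (by omega)).trans (choose_le_succ_of_lt_half_left (by omega))

theorem choose_le_choose_of_le_of_le_sub {n a b : ℕ} (hab : a ≤ b) (hb : b ≤ n - a) :
    n.choose a ≤ n.choose b := by
  rcases le_or_gt b (n / 2) with h | h
  · exact choose_le_choose_of_le_of_le_half hab h
  · rw [← choose_symm (show b ≤ n by omega)]
    exact choose_le_choose_of_le_of_le_half (by omega) (by omega)

theorem cast_choose_three {K : Type*} [Field K] [CharZero K] (n : ℕ) :
    (n.choose 3 : K) = n * (n - 1) * (n - 2) / 6 := by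
  rcases lt_or_ge n 2 with h | h
  · interval_cases n <;> simp [choose_eq_zero_of_lt]
  have h3 : (n.choose 3 : K) * 3 = n.choose 2 * ((n - 2 : ℕ) : K) := by
    exact_mod_cast choose_succ_right_eq n 2
  rw [cast_choose_two, cast_sub h] at h3
  push_cast at h3
  linear_combination h3 / 3

end Nat

section OrderedField

variable {K : Type*} [Field K] [LinearOrder K] [IsStrictOrderedRing K]

theorem choose_mul_pow_mul_pow_le_one {x y : K} (hx : 0 ≤ x) (hy : 0 ≤ y) (hxy : x + y = 1)
    {n k : ℕ} (hk : k ≤ n) : (n.choose k : K) * x ^ k * y ^ (n - k) ≤ 1 := by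
  have hsum := add_pow x y n
  rw [hxy, one_pow] at hsum
  calc (n.choose k : K) * x ^ k * y ^ (n - k) = x ^ k * y ^ (n - k) * n.choose k := by ring
    _ ≤ ∑ i ∈ range (n + 1), x ^ i * y ^ (n - i) * (n.choose i : K) :=
      single_le_sum (f := fun i => x ^ i * y ^ (n - i) * (n.choose i : K))
        (fun i _ => by positivity) (mem_range.mpr (Nat.lt_succ_of_le hk))
    _ = 1 := hsum.symm

theorem choose_mul_pow_mul_pow_le_inv_choose {x y : K} (hx : 0 ≤ x) (hy : 0 ≤ y)
    (hxy : x + y = 1) {n k : ℕ} (hk : k ≤ n) :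
    (n.choose k : K) * y ^ (2 * n - 2 * k) * x ^ (2 * k) ≤ (n.choose k : K)⁻¹ := by
  have hC : (0 : K) < n.choose k := by exact_mod_cast Nat.choose_pos hk
  set b : K := n.choose k * x ^ k * y ^ (n - k)
  have hb : b ≤ 1 := choose_mul_pow_mul_pow_le_one hx hy hxy hk
  have hb₀ : 0 ≤ b := by positivity
  calc (n.choose k : K) * y ^ (2 * n - 2 * k) * x ^ (2 * k) = b ^ 2 / n.choose k := by
        rw [show 2 * n - 2 * k = (n - k) * 2 by omega, pow_mul, mul_comm 2 k, pow_mul]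
        field_simp
        ring
    _ ≤ 1 / n.choose k := by gcongr; exact pow_le_one₀ hb₀ hb
    _ = (n.choose k : K)⁻¹ := one_div _

theorem div_add_one_pow_le_half {m : ℕ} (hm : m ≠ 0) : ((m : K) / (m + 1)) ^ m ≤ 1 / 2 := by
  have hm' : (0 : K) < m := by positivity
  have hbern : 1 + m * (m : K)⁻¹ ≤ (1 + (m : K)⁻¹) ^ m :=
    one_add_mul_le_pow (by linarith [inv_pos.mpr hm']) m
  rw [mul_inv_cancel₀ hm'.ne'] at hbern
  have hinv : (m : K) / (m + 1) = (1 + (m : K)⁻¹)⁻¹ := by field_simp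
  rw [hinv, inv_pow, one_div]
  exact inv_anti₀ two_pos (by linarith)

end OrderedField

noncomputable def binomTerm (n k : ℕ) : ℝ :=
  (n.choose k : ℝ) * (1 - (k : ℝ) / n) ^ (2 * n - 2 * k) * ((k : ℝ) / n) ^ (2 * k)

theorem binomTerm_le_inv_choose {n k : ℕ} (hk : k ≤ n) :
    binomTerm n k ≤ (n.choose k : ℝ)⁻¹ := by
  have hkn : (k : ℝ) / n ≤ 1 := div_le_one_of_le₀ (by exact_mod_cast hk) n.cast_nonneg
  exact choose_mul_pow_mul_pow_le_inv_choose (by positivity) (by linarith) (by ring) hk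

theorem binomTerm_sub_one_le {n : ℕ} (hn : 2 ≤ n) : binomTerm n (n - 1) ≤ (4 * n : ℝ)⁻¹ := by
  obtain ⟨m, rfl⟩ : ∃ m, n = m + 1 := ⟨n - 1, by omega⟩
  have hrest : 1 - (m : ℝ) / (m + 1) = (m + 1 : ℝ)⁻¹ := by field_simp; ring
  have hterm : binomTerm (m + 1) m = (m + 1 : ℝ)⁻¹ * (((m : ℝ) / (m + 1)) ^ m) ^ 2 := by
    rw [binomTerm, Nat.choose_succ_self_right, show 2 * (m + 1) - 2 * m = 2 by omega,
      mul_comm 2 m, pow_mul]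
    push_cast
    rw [hrest]
    field_simp
  push_cast
  rw [hterm]
  calc (m + 1 : ℝ)⁻¹ * (((m : ℝ) / (m + 1)) ^ m) ^ 2 ≤ (m + 1 : ℝ)⁻¹ * (1 / 2) ^ 2 := by
        gcongr
        exact div_add_one_pow_le_half (by omega)
    _ = (4 * (m + 1 : ℝ))⁻¹ := by rw [mul_inv]; ring

theorem sum_binomTerm_Icc_le {n : ℕ} (hn : 6 ≤ n) :
    ∑ k ∈ Icc 2 (n - 1), binomTerm n k
      ≤ (4 * n : ℝ)⁻¹ + 2 * (n.choose 2 : ℝ)⁻¹ + (n - 5) * (n.choose 3 : ℝ)⁻¹ := by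
  have hsplit : Icc 2 (n - 1) = insert (n - 1) (insert 2 (insert (n - 2) (Icc 3 (n - 3)))) := by
    ext; simp only [mem_Icc, mem_insert]; omega
  rw [hsplit, sum_insert (by simp only [mem_Icc, mem_insert]; omega),
    sum_insert (by simp only [mem_Icc, mem_insert]; omega),
    sum_insert (by simp only [mem_Icc]; omega)]
  have htop := binomTerm_sub_one_le (n := n) (by omega)
  have hbot := binomTerm_le_inv_choose (n := n) (k := 2) (by omega)
  have hsub : binomTerm n (n - 2) ≤ (n.choose 2 : ℝ)⁻¹ := by
    rw [← Nat.choose_symm (show 2 ≤ n by omega)]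
    exact binomTerm_le_inv_choose (by omega)
  have hmid : ∑ k ∈ Icc 3 (n - 3), binomTerm n k ≤ #(Icc 3 (n - 3)) • (n.choose 3 : ℝ)⁻¹ := by
    refine sum_le_card_nsmul _ _ _ fun k hk => ?_
    rw [mem_Icc] at hk
    refine (binomTerm_le_inv_choose (by omega)).trans (inv_anti₀ ?_ ?_)
    · exact_mod_cast Nat.choose_pos (by omega)
    · exact_mod_cast Nat.choose_le_choose_of_le_of_le_sub hk.1 hk.2
  rw [Nat.card_Icc, show n - 3 + 1 - 3 = n - 5 by omega, nsmul_eq_mul,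
    Nat.cast_sub (by omega)] at hmid
  push_cast at hmid
  linarith

/-- For `n > 5`, `∑_{k=2}^{n-1} C(n,k)(1-k/n)^(2n-2k)(k/n)^(2k) ≤ 2/n`. -/
theorem stmt_6 (n : ℕ) (hn : 5 < n) :
    ∑ k ∈ Finset.Icc 2 (n - 1),
        (n.choose k : ℝ) * (1 - (k : ℝ) / n) ^ (2 * n - 2 * k) * ((k : ℝ) / n) ^ (2 * k)
      ≤ 2 / (n : ℝ) := by
  refine (sum_binomTerm_Icc_le hn).trans ?_
  rw [Nat.cast_choose_two, Nat.cast_choose_three, ← sub_nonneg]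
  have hn₆ : (6 : ℝ) ≤ n := by exact_mod_cast hn
  have hn₁ : (0 : ℝ) < n - 1 := by linarith
  have hn₂ : (0 : ℝ) < n - 2 := by linarith
  have hcleared : 2 / (n : ℝ) - ((4 * n : ℝ)⁻¹ + 2 * ((n : ℝ) * (n - 1) / 2)⁻¹
      + (n - 5) * ((n : ℝ) * (n - 1) * (n - 2) / 6)⁻¹)
      = (7 * n ^ 2 - 61 * n + 166) / (4 * n * (n - 1) * (n - 2)) := by
    field_simp
    ring
  rw [hcleared]
  exact div_nonneg (by nlinarith) (by positivity)
end

section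
/- Let $n = 2m$ and consider the deterministic update: given $x \in \mathbb{F}_2^n$ and bit $r$, set $x' = (x_1,\ldots,x_{m}\oplus r,\ldots,x_n)$ and then apply $f(x') = (x'_2,\ldots,x'_n, \oplus_{i=1}^n x'_i)$. Starting from $x$ and applying this with bits $r_1,\ldots,r_n$, the resulting state after $n$ steps equals $BR + \vec{x}$ over $\mathbb{F}_2$, where $B = \begin{pmatrix} I_m & C \\ I_m & I_m\end{pmatrix}$, $C$ is the $m\times m$ matrix with $C_{i,i+1}=1$ for $i<m$ and zeros elsewhere, $R = (r_1,\ldots,r_n)^T$, and $\vec{x} = (\oplus_{i=1}^n x_i, x_1, x_2, \ldots, x_{n-1})^T$. Moreover $B$ is invertible over $\mathbb{F}_2$. -/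
private def gv {n : ℕ} (x : Fin n → ZMod 2) (a : ℕ) : ZMod 2 :=
  if h : a < n then x ⟨a, h⟩ else 0

private lemma gv_lt {n : ℕ} (x : Fin n → ZMod 2) {a : ℕ} (h : a < n) :
    gv x a = x ⟨a, h⟩ := dif_pos h

private lemma gv_ge {n : ℕ} (x : Fin n → ZMod 2) {a : ℕ} (h : n ≤ a) :
    gv x a = 0 := dif_neg (by omega)

private lemma z2 : ∀ a : ZMod 2, a + a = 0 := by decide

private def Aform (m : ℕ) (x r : Fin (2 * m) → ZMod 2) (c : Prop) [Decidable c] (s : ℕ) :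
    ZMod 2 :=
  if s < 2 * m then
    gv x s + (if c ∧ m ≤ s + 1 then gv r (s + 1 - m) else 0)
  else
    (if s = 2 * m then (∑ j, x j) + gv r 0
     else gv x (s - 2 * m - 1) + gv r (s - 2 * m) + (if 3 * m ≤ s then gv r (s - 3 * m) else 0))
    + (if c then gv r (s + 1 - m) else 0)

private def Pform (m : ℕ) (x r : Fin (2 * m) → ZMod 2) (k : ℕ) : ZMod 2 :=
  if k = 0 then ∑ j, x j else gv x (k - 1) + (if m ≤ k then gv r (k - m) else 0)

private lemma ident1 (m k : ℕ) (x r : Fin (2 * m) → ZMod 2) (hm : 2 ≤ m) (hk : k + 1 ≤ 2 * m) :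
    Aform m x r (m - 1 + 1 < m) (m - 1 + k) + gv r k
      = Aform m x r (m - 2 + 1 < m) (m - 2 + (k + 1)) := by
  have hs : m - 2 + (k + 1) = m - 1 + k := by omega
  rw [hs]
  simp only [Aform]
  rw [show m - 1 + k + 1 - m = k from by omega]
  by_cases h1 : m - 1 + k < 2 * m
  · rw [if_pos h1, if_pos h1, if_neg (show ¬((m - 1 + 1 < m) ∧ m ≤ m - 1 + k + 1) from by omega),
      if_pos (show (m - 2 + 1 < m) ∧ m ≤ m - 1 + k + 1 from ⟨by omega, by omega⟩)]
    ring
  · rw [if_neg h1, if_neg h1, if_neg (show ¬(m - 1 + 1 < m) from by omega),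
      if_pos (show m - 2 + 1 < m from by omega)]
    ring

private lemma ident2 (m k iv : ℕ) (x r : Fin (2 * m) → ZMod 2) (hm : 1 ≤ m)
    (hne : iv + 1 ≠ m - 1) :
    Aform m x r (iv + 1 + 1 < m) (iv + 1 + k) = Aform m x r (iv + 1 < m) (iv + (k + 1)) := by
  have hs : iv + 1 + k = iv + (k + 1) := by omega
  have hc : (iv + 1 + 1 < m) ↔ (iv + 1 < m) := by omega
  simp only [Aform]
  simp only [hs, hc]

private lemma ident3 (m k : ℕ) (x r : Fin (2 * m) → ZMod 2) (hm : 1 ≤ m) (hk : k + 1 ≤ 2 * m) :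
    Pform m x r k + gv r k = Aform m x r (2 * m - 1 + 1 < m) (2 * m - 1 + (k + 1)) := by
  have hs : 2 * m - 1 + (k + 1) = 2 * m + k := by omega
  rw [hs]
  simp only [Aform, Pform]
  rw [if_neg (show ¬(2 * m + k < 2 * m) from by omega),
    if_neg (show ¬(2 * m - 1 + 1 < m) from by omega), add_zero]
  by_cases hk0 : k = 0
  · subst hk0
    rw [if_pos rfl, if_pos (show 2 * m + 0 = 2 * m from by omega)]
  · rw [if_neg hk0, if_neg (show ¬(2 * m + k = 2 * m) from by omega),
      show 2 * m + k - 2 * m - 1 = k - 1 from by omega,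
      show 2 * m + k - 2 * m = k from by omega]
    by_cases hmk : m ≤ k
    · rw [if_pos hmk, if_pos (show 3 * m ≤ 2 * m + k from by omega),
        show 2 * m + k - 3 * m = k - m from by omega]
      ring
    · rw [if_neg hmk, if_neg (show ¬(3 * m ≤ 2 * m + k) from by omega)]
      ring

private lemma ident4 (m k : ℕ) (x r : Fin (2 * m) → ZMod 2) (hm : 1 ≤ m) (hk : k + 1 ≤ 2 * m) :
    Aform m x r (0 + 1 < m) (0 + k) + (if m - 1 = 0 then gv r k else 0)
      = Pform m x r (k + 1) := by
  simp only [Aform, Pform]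
  rw [show (0 + k : ℕ) = k from by omega]
  rw [if_pos (show k < 2 * m from by omega), if_neg (show ¬(k + 1 = 0) from by omega),
    show k + 1 - 1 = k from by omega]
  by_cases hm1 : m = 1
  · subst hm1
    rw [if_neg (show ¬((0 + 1 < 1) ∧ 1 ≤ k + 1) from by omega),
      if_pos (show (1 : ℕ) - 1 = 0 from by omega),
      if_pos (show 1 ≤ k + 1 from by omega),
      show k + 1 - 1 = k from by omega]
    ring
  · rw [if_neg (show ¬(m - 1 = 0) from by omega)]
    by_cases h2 : m ≤ k + 1
    · rw [if_pos (show (0 + 1 < m) ∧ m ≤ k + 1 from ⟨by omega, h2⟩), if_pos h2]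
      ring
    · rw [if_neg (fun hh => h2 hh.2), if_neg h2]
      ring

private lemma ident6 (m iv : ℕ) (x r : Fin (2 * m) → ZMod 2) (hm : 1 ≤ m) (hiv : iv < 2 * m) :
    Aform m x r (iv + 1 < m) (iv + 2 * m) =
      (if iv < m then gv r iv + gv r (iv + m + 1) else gv r (iv - m) + gv r iv)
      + (if iv = 0 then ∑ j, x j else gv x (iv - 1)) := by
  simp only [Aform]
  rw [if_neg (show ¬(iv + 2 * m < 2 * m) from by omega)]
  by_cases h0 : iv = 0
  · subst h0
    rw [if_pos (show 0 + 2 * m = 2 * m from by omega), if_pos rfl,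
      if_pos (show (0 : ℕ) < m from by omega)]
    by_cases hm1 : 1 < m
    · rw [if_pos (show 0 + 1 < m from by omega),
        show 0 + 2 * m + 1 - m = m + 1 from by omega,
        show (0 : ℕ) + m + 1 = m + 1 from by omega]
      ring
    · rw [if_neg (show ¬(0 + 1 < m) from by omega),
        gv_ge r (show 2 * m ≤ 0 + m + 1 from by omega)]
      ring
  · rw [if_neg (show ¬(iv + 2 * m = 2 * m) from by omega), if_neg h0,
      show iv + 2 * m - 2 * m - 1 = iv - 1 from by omega,
      show iv + 2 * m - 2 * m = iv from by omega]
    by_cases him : iv < m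
    · rw [if_pos him, if_neg (show ¬(3 * m ≤ iv + 2 * m) from by omega)]
      by_cases h2 : iv + 1 < m
      · rw [if_pos h2, show iv + 2 * m + 1 - m = iv + m + 1 from by omega]
        ring
      · rw [if_neg h2, gv_ge r (show 2 * m ≤ iv + m + 1 from by omega)]
        ring
    · rw [if_neg him, if_pos (show 3 * m ≤ iv + 2 * m from by omega),
        if_neg (show ¬(iv + 1 < m) from by omega),
        show iv + 2 * m - 3 * m = iv - m from by omega]
      ring


private lemma sum_f (m : ℕ) (hm : 1 ≤ m)
    (f : (Fin (2 * m) → ZMod 2) → (Fin (2 * m) → ZMod 2))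
    (hf : ∀ (x : Fin (2 * m) → ZMod 2) (i : Fin (2 * m)),
      f x i = if h : i.val + 1 < 2 * m then x ⟨i.val + 1, h⟩ else ∑ j, x j)
    (y : Fin (2 * m) → ZMod 2) :
    ∑ j, f y j = y ⟨0, by omega⟩ := by
  haveI : NeZero (2 * m) := ⟨by omega⟩
  obtain ⟨L, hLv⟩ : ∃ L : Fin (2 * m), L.val = 2 * m - 1 := ⟨⟨2 * m - 1, by omega⟩, rfl⟩
  have e1 : (1 : Fin (2 * m)).val = 1 := by
    rw [Fin.val_one']; exact Nat.mod_eq_of_lt (by omega)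
  have hterm : ∀ j : Fin (2 * m), f y j =
      y (j + 1) + (if j = L then (∑ i, y i) + y (j + 1) else 0) := by
    intro j
    rw [hf]
    by_cases h : j.val + 1 < 2 * m
    · have h1v : (j + 1).val = j.val + 1 := by
        rw [Fin.val_add, e1]; exact Nat.mod_eq_of_lt h
      rw [dif_pos h, if_neg, add_zero]
      · exact congrArg y (Fin.ext (by rw [h1v]))
      · intro hj
        rw [hj] at h
        omega
    · rw [dif_neg h, if_pos (Fin.ext (show j.val = L.val from by have := j.isLt; rw [hLv]; omega))]
      rw [add_comm (∑ i, y i) (y (j + 1)), ← add_assoc, z2 (y (j + 1)), zero_add]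
  have hsum1 : ∑ j : Fin (2 * m), y (j + 1) = ∑ j, y j :=
    Fintype.sum_equiv (Equiv.addRight 1) _ _ (fun j => rfl)
  have hL1 : L + 1 = (⟨0, by omega⟩ : Fin (2 * m)) := by
    apply Fin.ext
    rw [Fin.val_add, e1, hLv, show 2 * m - 1 + 1 = 2 * m from by omega]
    exact Nat.mod_self _
  calc ∑ j, f y j
      = ∑ j : Fin (2 * m), (y (j + 1) + (if j = L then (∑ i, y i) + y (j + 1) else 0)) :=
        Finset.sum_congr rfl fun j _ => hterm j
    _ = (∑ j : Fin (2 * m), y (j + 1))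
          + ∑ j : Fin (2 * m), (if j = L then (∑ i, y i) + y (j + 1) else 0) :=
        Finset.sum_add_distrib
    _ = (∑ j, y j) + ((∑ i, y i) + y (L + 1)) := by
        rw [hsum1, Fintype.sum_ite_eq' L (fun j => (∑ i, y i) + y (j + 1))]
    _ = y ⟨0, by omega⟩ := by
        rw [hL1, ← add_assoc, z2 (∑ j, y j), zero_add]

private lemma sum_update {n : ℕ} (y : Fin n → ZMod 2) (p : Fin n) (c : ZMod 2) :
    ∑ j, Function.update y p (y p + c) j = (∑ j, y j) + c := by
  classical
  rw [Finset.sum_update_of_mem (Finset.mem_univ p)]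
  rw [← Finset.add_sum_erase _ y (Finset.mem_univ p), Finset.sdiff_singleton_eq_erase]
  ring

private lemma sum_ind {n : ℕ} (v : Fin n → ZMod 2) (c : ℕ) :
    (∑ j : Fin n, if j.val = c then v j else 0) = gv v c := by
  by_cases h : c < n
  · rw [gv_lt v h]
    have : ∀ j : Fin n, (if j.val = c then v j else 0) = (if j = ⟨c, h⟩ then v j else 0) := by
      intro j
      congr 1
      exact propext ⟨fun hh => Fin.ext hh, fun hh => by rw [hh]⟩
    rw [Finset.sum_congr rfl fun j _ => this j, Fintype.sum_ite_eq' (⟨c, h⟩ : Fin n) v]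
  · rw [gv_ge v (by omega)]
    apply Finset.sum_eq_zero
    intro j _
    rw [if_neg (by have := j.isLt; omega)]

private lemma mulvec_B (m : ℕ) (hm : 1 ≤ m)
    (B : Matrix (Fin (2 * m)) (Fin (2 * m)) (ZMod 2))
    (hB : ∀ i j : Fin (2 * m), B i j =
      if i.val < m then
        (if j = i then 1 else if j.val = i.val + m + 1 then 1 else 0)
      else
        (if j.val = i.val - m then 1 else if j = i then 1 else 0))
    (v : Fin (2 * m) → ZMod 2) (i : Fin (2 * m)) :
    B.mulVec v i = if i.val < m then gv v i.val + gv v (i.val + m + 1)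
      else gv v (i.val - m) + gv v i.val := by
  have key : ∀ j, B i j * v j =
      (if j.val = (if i.val < m then i.val else i.val - m) then v j else 0)
      + (if j.val = (if i.val < m then i.val + m + 1 else i.val) then v j else 0) := by
    intro j
    rw [hB]
    by_cases him : i.val < m <;>
      simp only [him, if_true, if_false, Fin.ext_iff] <;>
      split_ifs <;> first | ring1 | (exfalso; omega)
  have hsum : B.mulVec v i =
      gv v (if i.val < m then i.val else i.val - m)
      + gv v (if i.val < m then i.val + m + 1 else i.val) := by
    calc B.mulVec v i = ∑ j, B i j * v j := rfl
      _ = ∑ j, ((if j.val = (if i.val < m then i.val else i.val - m) then v j else 0)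
          + (if j.val = (if i.val < m then i.val + m + 1 else i.val) then v j else 0)) :=
        Finset.sum_congr rfl fun j _ => key j
      _ = _ := by rw [Finset.sum_add_distrib, sum_ind, sum_ind]
  rw [hsum]
  by_cases him : i.val < m <;> simp [him]


private lemma zz2 : ∀ a b : ZMod 2, a + b = 0 → a = b := by decide

private lemma B_unit (m : ℕ) (hm : 1 ≤ m)
    (B : Matrix (Fin (2 * m)) (Fin (2 * m)) (ZMod 2))
    (hB : ∀ i j : Fin (2 * m), B i j =
      if i.val < m then
        (if j = i then 1 else if j.val = i.val + m + 1 then 1 else 0)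
      else
        (if j.val = i.val - m then 1 else if j = i then 1 else 0)) :
    IsUnit B := by
  rw [Matrix.isUnit_iff_isUnit_det, isUnit_iff_ne_zero]
  intro hdet
  obtain ⟨v, hvne, hveq⟩ := Matrix.exists_mulVec_eq_zero_iff.mpr hdet
  apply hvne
  have hrow : ∀ i : Fin (2 * m),
      (if i.val < m then gv v i.val + gv v (i.val + m + 1)
        else gv v (i.val - m) + gv v i.val) = 0 := by
    intro i
    rw [← mulvec_B m hm B hB v i, hveq]
    rfl
  have hup : ∀ a : ℕ, m ≤ a → a < 2 * m → gv v a = gv v (a - m) := by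
    intro a h1 h2
    have := hrow ⟨a, h2⟩
    rw [if_neg (show ¬((⟨a, h2⟩ : Fin (2 * m)).val < m) from by simpa using by omega)] at this
    exact (zz2 _ _ this).symm
  have hlow : ∀ a : ℕ, a < m → gv v a = gv v (a + m + 1) := by
    intro a h1
    have h2 : a < 2 * m := by omega
    have := hrow ⟨a, h2⟩
    rw [if_pos (show ((⟨a, h2⟩ : Fin (2 * m)).val < m) from h1)] at this
    exact zz2 _ _ this
  have key : ∀ j : ℕ, j < m → gv v (m - 1 - j) = 0 := by
    intro j
    induction j with
    | zero =>
      intro _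
      rw [hlow (m - 1 - 0) (by omega), gv_ge v (by omega)]
    | succ j ih =>
      intro hj
      have e1 : gv v (m - 1 - (j + 1)) = gv v (m - 1 - (j + 1) + m + 1) :=
        hlow _ (by omega)
      have e2 : gv v (m - 1 - (j + 1) + m + 1) = gv v (m - 1 - j) := by
        rw [hup (m - 1 - (j + 1) + m + 1) (by omega) (by omega)]
        congr 1
        omega
      rw [e1, e2, ih (by omega)]
  have hall : ∀ a : ℕ, a < 2 * m → gv v a = 0 := by
    intro a ha
    by_cases h : a < m
    · have := key (m - 1 - a) (by omega)
      rwa [show m - 1 - (m - 1 - a) = a from by omega] at this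
    · rw [hup a (by omega) ha]
      have := key (m - 1 - (a - m)) (by omega)
      rwa [show m - 1 - (m - 1 - (a - m)) = a - m from by omega] at this
  funext i
  have := hall i.val i.isLt
  rwa [gv_lt v i.isLt] at this


/-- The middle-coordinate shift-register chain on `𝔽₂^(2m)`: after `n = 2m`
deterministic-update steps with bits `r₁,…,r_n`, the state equals
`B R + x⃗` over `𝔽₂`, where `B = [[I, C],[I, I]]` with `C` the upper shift,
and `x⃗ = (⊕ᵢ xᵢ, x₁, …, x_{n-1})`.  Moreover `B` is invertible. -/
theorem stmt_16 (m : ℕ) (hm : 1 ≤ m)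
    (f : (Fin (2 * m) → ZMod 2) → (Fin (2 * m) → ZMod 2))
    (hf : ∀ (x : Fin (2 * m) → ZMod 2) (i : Fin (2 * m)),
      f x i = if h : i.val + 1 < 2 * m then x ⟨i.val + 1, h⟩ else ∑ j, x j)
    (step : (Fin (2 * m) → ZMod 2) → ZMod 2 → (Fin (2 * m) → ZMod 2))
    (hstep : ∀ (x : Fin (2 * m) → ZMod 2) (rbit : ZMod 2),
      step x rbit = f (Function.update x ⟨m - 1, by omega⟩
        (x ⟨m - 1, by omega⟩ + rbit)))
    (x : Fin (2 * m) → ZMod 2) (r : Fin (2 * m) → ZMod 2)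
    (X : ℕ → (Fin (2 * m) → ZMod 2)) (hX0 : X 0 = x)
    (hXs : ∀ k : Fin (2 * m), X (k.val + 1) = step (X k.val) (r k))
    (B : Matrix (Fin (2 * m)) (Fin (2 * m)) (ZMod 2))
    (hB : ∀ i j : Fin (2 * m), B i j =
      if i.val < m then
        (if j = i then 1 else if j.val = i.val + m + 1 then 1 else 0)
      else
        (if j.val = i.val - m then 1 else if j = i then 1 else 0))
    (xvec : Fin (2 * m) → ZMod 2)
    (hxvec : ∀ i : Fin (2 * m),
      xvec i = if h : i.val = 0 then ∑ j, x j else x ⟨i.val - 1, by omega⟩) :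
    X (2 * m) = B.mulVec r + xvec ∧ IsUnit B := by
  constructor
  · have inv : ∀ k, k ≤ 2 * m →
        (∀ i : Fin (2 * m), X k i = Aform m x r (i.val + 1 < m) (i.val + k)) ∧
        (∑ j, X k j = Pform m x r k) := by
      intro k
      induction k with
      | zero =>
        intro _
        constructor
        · intro i
          rw [hX0]
          simp only [Aform]
          rw [if_pos (show i.val + 0 < 2 * m from by have := i.isLt; omega),
            if_neg (show ¬((i.val + 1 < m) ∧ m ≤ i.val + 0 + 1) from by omega), add_zero,
            gv_lt x (show i.val + 0 < 2 * m from by have := i.isLt; omega)]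
          exact congrArg x (Fin.ext rfl)
        · rw [hX0]
          simp [Pform]
      | succ k ih =>
        intro hk1
        obtain ⟨ihA, ihS⟩ := ih (by omega)
        have hkm : k < 2 * m := by omega
        have hXsk : X (k + 1) = step (X k) (r ⟨k, hkm⟩) := hXs ⟨k, hkm⟩
        rw [hstep] at hXsk
        have ihA' : ∀ (a : ℕ) (h : a < 2 * m),
            X k ⟨a, h⟩ = Aform m x r (a + 1 < m) (a + k) := fun a h => ihA ⟨a, h⟩
        have hyv : ∀ (a : ℕ) (ha : a < 2 * m),
            (Function.update (X k) (⟨m - 1, by omega⟩ : Fin (2 * m))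
              (X k ⟨m - 1, by omega⟩ + r ⟨k, hkm⟩)) ⟨a, ha⟩ =
            if a = m - 1 then Aform m x r (m - 1 + 1 < m) (m - 1 + k) + gv r k
            else Aform m x r (a + 1 < m) (a + k) := by
          intro a ha
          rw [Function.update_apply]
          by_cases hj : a = m - 1
          · rw [if_pos (Fin.ext (show a = m - 1 from hj)), if_pos hj,
              ihA' (m - 1) (by omega), gv_lt r hkm]
          · rw [if_neg (fun hh => hj (congrArg Fin.val hh)), if_neg hj, ihA' a ha]
        have hysum : (∑ j, (Function.update (X k) (⟨m - 1, by omega⟩ : Fin (2 * m))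
              (X k ⟨m - 1, by omega⟩ + r ⟨k, hkm⟩)) j) = Pform m x r k + gv r k := by
          rw [sum_update (X k) _ (r ⟨k, hkm⟩), ihS, gv_lt r hkm]
        constructor
        · intro i
          rw [hXsk, hf]
          split
          · next h =>
            rw [hyv (i.val + 1) h]
            by_cases ha1 : i.val + 1 = m - 1
            · rw [if_pos ha1]
              have hm2 : 2 ≤ m := by omega
              have hiv : i.val = m - 2 := by omega
              rw [hiv]
              exact ident1 m k x r hm2 hk1
            · rw [if_neg ha1]
              exact ident2 m k i.val x r hm ha1
          · next h =>
            have hiv : i.val = 2 * m - 1 := by have := i.isLt; omega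
            rw [hysum, hiv]
            exact ident3 m k x r hm hk1
        · rw [hXsk, sum_f m hm f hf _, hyv 0 (by omega)]
          by_cases h0 : (0 : ℕ) = m - 1
          · rw [if_pos h0, ← h0]
            have h4 := ident4 m k x r hm hk1
            rwa [if_pos (by omega : m - 1 = 0)] at h4
          · rw [if_neg h0]
            have h4 := ident4 m k x r hm hk1
            rwa [if_neg (fun hh => h0 (by omega)), add_zero] at h4
    obtain ⟨hA, -⟩ := inv (2 * m) le_rfl
    funext i
    rw [hA i, Pi.add_apply, mulvec_B m hm B hB r i, hxvec i,
      ident6 m i.val x r hm i.isLt]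
    by_cases h0 : i.val = 0
    · rw [dif_pos h0, if_pos h0]
    · rw [dif_neg h0, if_neg h0, gv_lt x (show i.val - 1 < 2 * m from by have := i.isLt; omega)]
  · exact B_unit m hm B hB
end
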